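/- Let f be a strongly positive symplectic twist map of 𝕋^d×ℝ^d with bounded rate, let G ∈ C²(𝕋^d), and for ε ∈ ℝ let f_ε be the symplectic twist map whose generating function is S_ε(q,Q) := S(q,Q) + εG(q), where S is a generating function of f. Then: (i) for every ε₀ ≥ 0 there exists K(ε₀) ≥ 0 such that every C¹ Lagrangian graph invariant by some f_ε with |ε| ≤ ε₀ is Lipschitz with Lipschitz constant K(ε₀); (ii) if G is not constant, there exists Λ > 0 such that for every ε ∈ ℝ with |ε| ≥ Λ, the map f_ε does not admit any C¹ Lagrangian invariant graph. -/

import Mathlib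

open Function Set Filter Topology MeasureTheory

noncomputable section

/-- `ℝ^d` with the Euclidean structure. -/
abbrev Ed (d : ℕ) := EuclideanSpace ℝ (Fin d)
/-- `ℂ^d`. -/
abbrev Cd (d : ℕ) := EuclideanSpace ℂ (Fin d)

variable {d : ℕ}

/-- The real vector associated with an integer vector `m ∈ ℤ^d`. -/
def intVec (d : ℕ) (m : Fin d → ℤ) : Ed d := WithLp.toLp 2 (fun i => (m i : ℝ))

/-- The complex vector associated with an integer vector `m ∈ ℤ^d`. -/
def intVecC (d : ℕ) (m : Fin d → ℤ) : Cd d := WithLp.toLp 2 (fun i => (m i : ℂ))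

/-- The canonical embedding `ℝ^d → ℂ^d`. -/
def complexify (q : Ed d) : Cd d := WithLp.toLp 2 (fun i => (q i : ℂ))

/-- The standard pairing `⟨p, v⟩ = ∑ i, p i * v i` on `ℝ^d`. -/
def pairing (p v : Ed d) : ℝ := ∑ i, p i * v i

/-- The standard bilinear pairing on `ℂ^d`. -/
def pairingC (p v : Cd d) : ℂ := ∑ i, p i * v i

/-- `g` is a `C¹` diffeomorphism. -/
def IsC1Diffeo {X Y : Type*} [NormedAddCommGroup X] [NormedSpace ℝ X]
    [NormedAddCommGroup Y] [NormedSpace ℝ Y] (g : X → Y) : Prop :=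
  ContDiff ℝ 1 g ∧ ∃ ginv : Y → X, ContDiff ℝ 1 ginv ∧
    Function.LeftInverse ginv g ∧ Function.RightInverse ginv g

/-- `g` is a holomorphic diffeomorphism. -/
def IsHolDiffeo {X Y : Type*} [NormedAddCommGroup X] [NormedSpace ℂ X]
    [NormedAddCommGroup Y] [NormedSpace ℂ Y] (g : X → Y) : Prop :=
  Differentiable ℂ g ∧ ∃ ginv : Y → X, Differentiable ℂ ginv ∧
    Function.LeftInverse ginv g ∧ Function.RightInverse ginv g

/-- `F(q+m, p) = F(q, p) + (m, 0)` for all `m ∈ ℤ^d`: `F` is the lift of a map of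
`𝕋^d × ℝ^d`. -/
def IsZdLift (F : Ed d × Ed d → Ed d × Ed d) : Prop :=
  ∀ (m : Fin d → ℤ) (q p : Ed d),
    F (q + intVec d m, p) = ((F (q, p)).1 + intVec d m, (F (q, p)).2)

/-- `S` is a generating function for the lift `F`, i.e. `S(q+m, Q+m) = S(q, Q)` and
`P dQ - p dq = dS(q, Q)`; the latter means `∂₁S(q, Q(q,p)) = -p` and
`∂₂S(q, Q(q,p)) = P(q,p)`. -/
structure IsGenFun (F : Ed d × Ed d → Ed d × Ed d) (S : Ed d × Ed d → ℝ) : Prop where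
  periodic : ∀ (m : Fin d → ℤ) (q Q : Ed d), S (q + intVec d m, Q + intVec d m) = S (q, Q)
  dq : ∀ q p v : Ed d, fderiv ℝ (fun q' => S (q', (F (q, p)).1)) q v = -(pairing p v)
  dQ : ∀ q p v : Ed d, fderiv ℝ (fun Q' => S (q, Q')) (F (q, p)).1 v = pairing (F (q, p)).2 v

/-- `F : ℝ^d × ℝ^d → ℝ^d × ℝ^d` is a lift of a symplectic twist map of `𝕋^d × ℝ^d`
with generating function `S`. -/
structure IsSymplecticTwistLift (F : Ed d × Ed d → Ed d × Ed d)
    (S : Ed d × Ed d → ℝ) : Prop where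
  diffeo : IsC1Diffeo F
  lift : IsZdLift F
  twist : IsC1Diffeo (fun x : Ed d × Ed d => (x.1, (F x).1))
  genfun : IsGenFun F S

/-- The mixed second derivative `∂²_{qQ} S (q,Q) (v, v)`. -/
def mixedS (S : Ed d × Ed d → ℝ) (q Q v : Ed d) : ℝ :=
  fderiv ℝ (fun Q' => fderiv ℝ (fun q' => S (q', Q')) q v) Q v

/-- The symplectic twist map with `C²` generating function `S` is positive. -/
def PositiveGenFun (S : Ed d × Ed d → ℝ) : Prop :=
  ContDiff ℝ 2 S ∧ ∃ α : ℝ, 0 < α ∧ ∀ q Q v : Ed d, mixedS S q Q v ≤ -α * ‖v‖ ^ 2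

/-- The symplectic twist map with `C²` generating function `S` is strongly positive. -/
def StronglyPositiveGenFun (S : Ed d × Ed d → ℝ) : Prop :=
  ContDiff ℝ 2 S ∧ ∃ α β : ℝ, 0 < α ∧ 0 < β ∧
    ∀ q Q v : Ed d, -β * ‖v‖ ^ 2 ≤ mixedS S q Q v ∧ mixedS S q Q v ≤ -α * ‖v‖ ^ 2

/-- The second derivative `∂²_{qq} S (q, Q)` as a continuous bilinear map. -/
def hessqq (S : Ed d × Ed d → ℝ) (q Q : Ed d) : Ed d →L[ℝ] Ed d →L[ℝ] ℝ :=
  fderiv ℝ (fun q' => fderiv ℝ (fun q'' => S (q'', Q)) q') q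

/-- The second derivative `∂²_{QQ} S (q, Q)` as a continuous bilinear map. -/
def hessQQ (S : Ed d × Ed d → ℝ) (q Q : Ed d) : Ed d →L[ℝ] Ed d →L[ℝ] ℝ :=
  fderiv ℝ (fun Q' => fderiv ℝ (fun Q'' => S (q, Q'')) Q') Q

/-- The symplectic twist map with `C²` generating function `S` has bounded rate:
`‖∂²_{qq} S‖_∞ + ‖∂²_{QQ} S‖_∞ < ∞`. -/
def BoundedRateGenFun (S : Ed d × Ed d → ℝ) : Prop :=
  ContDiff ℝ 2 S ∧ ∃ C : ℝ, ∀ q Q : Ed d, ‖hessqq S q Q‖ + ‖hessQQ S q Q‖ ≤ C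

/-- `γ : ℝ^d → ℝ^d` is `ℤ^d`-periodic. -/
def ZdPeriodic (γ : Ed d → Ed d) : Prop :=
  ∀ (m : Fin d → ℤ) (q : Ed d), γ (q + intVec d m) = γ q

/-- A function `G : ℝ^d → ℝ` is `ℤ^d`-periodic, i.e. is a function on `𝕋^d`. -/
def ZdPeriodicFun (G : Ed d → ℝ) : Prop :=
  ∀ (m : Fin d → ℤ) (q : Ed d), G (q + intVec d m) = G q

/-- The graph of `γ` is Lagrangian: `∫₀¹ γ(ν(t))·ν'(t) dt = 0` for every `C¹` loop `ν`. -/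
def IsLagrangianGraph (γ : Ed d → Ed d) : Prop :=
  ∀ ν : ℝ → Ed d, ContDiff ℝ 1 ν → (∀ t : ℝ, ν (t + 1) = ν t) →
    ∫ t in (0:ℝ)..1, pairing (γ (ν t)) (deriv ν t) = 0

/-- The graph of `γ` is an `(m, n)`-periodic graph of `F`: `F^n(q, γ(q)) = (q+m, γ(q))`. -/
def IsPeriodicGraph (F : Ed d × Ed d → Ed d × Ed d) (m : Fin d → ℤ) (n : ℕ)
    (γ : Ed d → Ed d) : Prop :=
  ∀ q : Ed d, F^[n] (q, γ q) = (q + intVec d m, γ q)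

/-- `m ∈ ℤ^d` and `n ∈ ℕ` are coprime. -/
def CoprimeVec (m : Fin d → ℤ) (n : ℕ) : Prop :=
  Nat.gcd (Finset.univ.gcd fun i => (m i).natAbs) n = 1

/-- The graph of `γ`, as a subset of `ℝ^d × ℝ^d`. -/
def graphSet (γ : Ed d → Ed d) : Set (Ed d × Ed d) := {x : Ed d × Ed d | x.2 = γ x.1}

/-- `F` admits a Lipschitz Lagrangian `(m,n)`-periodic graph. -/
def HasLipLagPeriodicGraph (F : Ed d × Ed d → Ed d × Ed d) (m : Fin d → ℤ) (n : ℕ) : Prop :=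
  ∃ γ : Ed d → Ed d, (∃ K : NNReal, LipschitzWith K γ) ∧ ZdPeriodic γ ∧
    IsLagrangianGraph γ ∧ IsPeriodicGraph F m n γ

/-- The symplectic twist map lifted by `F` satisfies the analyticity property: there is a
holomorphic diffeomorphism of `ℂ^d × ℂ^d` extending `F`, satisfying the twist condition
and admitting a holomorphic generating function. -/
def SatisfiesAnalyticityProperty (F : Ed d × Ed d → Ed d × Ed d) : Prop :=
  ∃ Fc : Cd d × Cd d → Cd d × Cd d,
    IsHolDiffeo Fc ∧
    (∀ q p : Ed d, Fc (complexify q, complexify p)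
        = (complexify (F (q, p)).1, complexify (F (q, p)).2)) ∧
    IsHolDiffeo (fun x : Cd d × Cd d => (x.1, (Fc x).1)) ∧
    ∃ Sc : Cd d × Cd d → ℂ, Differentiable ℂ Sc ∧
      (∀ (m : Fin d → ℤ) (q Q : Cd d), Sc (q + intVecC d m, Q + intVecC d m) = Sc (q, Q)) ∧
      (∀ q p v : Cd d, fderiv ℂ (fun q' => Sc (q', (Fc (q, p)).1)) q v = -(pairingC p v)) ∧
      (∀ q p v : Cd d,
        fderiv ℂ (fun Q' => Sc (q, Q')) (Fc (q, p)).1 v = pairingC (Fc (q, p)).2 v)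

/-- `G : 𝕋^d → ℝ` admits a holomorphic extension to `ℂ^d`. -/
def HasHolomorphicExtension (G : Ed d → ℝ) : Prop :=
  ∃ Gc : Cd d → ℂ, Differentiable ℂ Gc ∧ ∀ q : Ed d, Gc (complexify q) = (G q : ℂ)

/-- `F` is the lift of a completely integrable map `f(q,p) = (q + ∇ℓ₀(p), p)` where
`ℓ₀` is `C²` and `∇ℓ₀` is a `C¹` diffeomorphism of `ℝ^d`. -/
def CompletelyIntegrableLift (F : Ed d × Ed d → Ed d × Ed d) : Prop :=
  ∃ (ℓ : Ed d → ℝ) (g : Ed d → Ed d), ContDiff ℝ 2 ℓ ∧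
    (∀ p v : Ed d, fderiv ℝ ℓ p v = pairing (g p) v) ∧
    IsC1Diffeo g ∧ ∀ q p : Ed d, F (q, p) = (q + g p, p)

/-- The `ν`-th Fourier coefficient of a `ℤ^d`-periodic function `G : ℝ^d → ℝ`. -/
def fourierCoeffT (G : Ed d → ℝ) (ν : Fin d → ℤ) : ℂ :=
  ∫ q in {q : Ed d | ∀ i, q i ∈ Set.Icc (0:ℝ) 1},
    (G q : ℂ) * Complex.exp (-(2 * Real.pi * Complex.I) * ∑ i, (ν i : ℂ) * (q i : ℂ))

/-- The sequence `(x_j)_{j ∈ ℤ}` is action-minimizing for the generating function `S`. -/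
def IsMinimizingSeq (S : Ed d × Ed d → ℝ) (x : ℤ → Ed d) : Prop :=
  ∀ (k : ℤ) (N : ℕ) (w : ℕ → Ed d), w 0 = x k → w N = x (k + N) →
    ∑ j ∈ Finset.range N, S (x (k + j), x (k + j + 1)) ≤
      ∑ j ∈ Finset.range N, S (w j, w (j + 1))

/-- `x : ℤ → ℝ^d × ℝ^d` is a full orbit of `F`. -/
def IsFullOrbit (F : Ed d × Ed d → Ed d × Ed d) (x : ℤ → Ed d × Ed d) : Prop :=
  ∀ j : ℤ, x (j + 1) = F (x j)

/-- The orbit of `a` under `F` is action-minimizing (its projection is a minimizing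
sequence). -/
def OrbitMinimizing (F : Ed d × Ed d → Ed d × Ed d) (S : Ed d × Ed d → ℝ)
    (a : Ed d × Ed d) : Prop :=
  ∃ x : ℤ → Ed d × Ed d, x 0 = a ∧ IsFullOrbit F x ∧ IsMinimizingSeq S fun j => (x j).1

/-- The superlinearity condition `S(q,Q)/‖Q-q‖ → ∞` as `‖Q-q‖ → ∞`. -/
def SuperlinearGenFun (S : Ed d × Ed d → ℝ) : Prop :=
  ∀ A : ℝ, ∃ R : ℝ, ∀ q Q : Ed d, R ≤ ‖Q - q‖ → A * ‖Q - q‖ ≤ S (q, Q)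

/-- The determinant of `∂_p (π₁ ∘ F^n) (q, p)`. -/
def twistDet (F : Ed d × Ed d → Ed d × Ed d) (n : ℕ) (q p : Ed d) : ℝ :=
  LinearMap.det ((fderiv ℝ (fun p' => (F^[n] (q, p')).1) p : Ed d →L[ℝ] Ed d)
    : Ed d →ₗ[ℝ] Ed d)

/-- The set `A ⊆ ℝ` is infinite with points accumulating to `0`. -/
def InfiniteAccumulatingAtZero (A : Set ℝ) : Prop :=
  A.Infinite ∧ ∀ δ : ℝ, 0 < δ → ∃ ε ∈ A, ε ≠ 0 ∧ |ε| < δ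

/-!
If `ν` is a `C¹` Lagrangian graph invariant by the twist map with generating function `T`, then
`Dν` is symmetric, hence `ν = ∇u`, and `h = modifiedAction T u`, i.e.
`h (q, Q) = T (q, Q) + u q - u Q`, is invariant under the diagonal action of `ℤ^d` and, by
positivity of the twist, coercive; so it attains its minimum. At a minimiser `∂_q h = 0` forces `Q`
to be the image of `q` along the graph, and `h` is constant along the graph, so every such pair
`(q, Q)` minimises `h`. The second-order conditions there give `-∂²_{qq} T ≤ Dν ≤ ∂²_{QQ} T` as
quadratic forms. For `T = S + ε G` and bounded rate `C` this reads `-C - ε ∂²G ≤ Dν ≤ C`, which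
bounds the symmetric operator `Dν` in norm: (i). Adding the two bounds gives `ε ∂²G ≥ -2C`, and a
bounded function whose second derivative is `≥ -B` satisfies `f'² ≤ 4 B sup |f|`; hence
`|ε| (∂_v G)² ≤ 4 sup |G| (2 C ‖v‖² + 1)`, impossible for large `|ε|` unless `G` is constant: (ii).
-/

open Metric RealInnerProductSpace

theorem IsLocalMin.deriv2_nonneg_of_hasDerivAt {φ ρ : ℝ → ℝ} {a ρ' : ℝ}
    (hmin : IsLocalMin φ a) (hφ : ∀ t, HasDerivAt φ (ρ t) t) (hρ : HasDerivAt ρ ρ' a) :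
    0 ≤ ρ' := by
  by_contra! hneg
  have hρa : ρ a = 0 := hmin.hasDerivAt_eq_zero (hφ a)
  have hρneg : ∀ᶠ t in 𝓝[>] a, ρ t < 0 := by
    have hslope := (hasDerivAt_iff_tendsto_slope.mp hρ).mono_left (nhdsGT_le_nhdsNE a)
    filter_upwards [hslope.eventually (gt_mem_nhds hneg), self_mem_nhdsWithin] with t ht hat
    rw [slope_def_field, hρa, sub_zero] at ht
    exact ((div_lt_iff₀ (sub_pos.mpr hat)).mp ht).trans_eq (zero_mul _)
  obtain ⟨u, hau, hu⟩ := mem_nhdsGT_iff_exists_Ioo_subset.mp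
    (hρneg.and (nhdsWithin_le_nhds hmin))
  set b := (a + u) / 2
  have hab : a < b := by simp only [b]; linarith [mem_Ioi.mp hau]
  have hbu : b < u := by simp only [b]; linarith [mem_Ioi.mp hau]
  obtain ⟨ξ, hξ, hξeq⟩ := exists_hasDerivAt_eq_slope φ ρ hab
    (fun t _ => (hφ t).continuousAt.continuousWithinAt) (fun t _ => hφ t)
  have hρξ : ρ ξ < 0 := (hu ⟨hξ.1, hξ.2.trans hbu⟩).1
  have hφb : φ a ≤ φ b := (hu ⟨hab, hbu⟩).2
  rw [hξeq] at hρξ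
  exact hρξ.not_ge (div_nonneg (sub_nonneg.mpr hφb) (sub_pos.mpr hab).le)

theorem ConvexOn.add_mul_sub_le_of_hasDerivAt {g : ℝ → ℝ} {g' x : ℝ} (hg : ConvexOn ℝ univ g)
    (hgx : HasDerivAt g g' x) (y : ℝ) : g x + g' * (y - x) ≤ g y := by
  rcases lt_trichotomy x y with hxy | rfl | hxy
  · have := hg.le_slope_of_hasDerivAt (mem_univ x) (mem_univ y) hxy hgx
    rw [slope_def_field, le_div_iff₀ (sub_pos.mpr hxy)] at this
    linarith
  · simp
  · have := hg.slope_le_of_hasDerivAt (mem_univ y) (mem_univ x) hxy hgx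
    rw [slope_def_field, div_le_iff₀ (sub_pos.mpr hxy)] at this
    linarith

theorem sq_le_four_mul_of_abs_le_of_le_deriv2 {f f' f'' : ℝ → ℝ} {M B : ℝ} (hB : 0 < B)
    (hf : ∀ s, HasDerivAt f (f' s) s) (hf' : ∀ s, HasDerivAt f' (f'' s) s)
    (hM : ∀ s, |f s| ≤ M) (hf'' : ∀ s, -B ≤ f'' s) (x : ℝ) : f' x ^ 2 ≤ 4 * M * B := by
  set g : ℝ → ℝ := fun s => f s + B / 2 * (s - x) ^ 2
  have hg : ∀ s, HasDerivAt g (f' s + B * (s - x)) s := fun s => by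
    have h := ((hasDerivAt_id s).sub_const x).pow 2 |>.const_mul (B / 2)
    refine (hf s).add (h.congr_deriv ?_)
    simp; ring
  have hg' : ∀ s, HasDerivAt (fun s => f' s + B * (s - x)) (f'' s + B) s := fun s => by
    refine (hf' s).add ((((hasDerivAt_id s).sub_const x).const_mul B).congr_deriv ?_)
    simp
  have hconv : ConvexOn ℝ univ g := convexOn_of_hasDerivWithinAt2_nonneg convex_univ
    (fun s _ => (hg s).continuousAt.continuousWithinAt) (fun s _ => (hg s).hasDerivWithinAt)
    (fun s _ => (hg' s).hasDerivWithinAt) (fun s _ => by linarith [hf'' s])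
  -- the tangent line of `g` at `x`, evaluated at `x + f' x / B`, gives `f' x ^ 2 / (2 * B) ≤ 2 * M`
  have htangent := hconv.add_mul_sub_le_of_hasDerivAt (by simpa using hg x) (x + f' x / B)
  simp only [g, add_sub_cancel_left, sub_self] at htangent
  have hsq : f' x * (f' x / B) - B / 2 * (f' x / B) ^ 2 = f' x ^ 2 / (2 * B) := by
    field_simp; ring
  have key : f' x ^ 2 / (2 * B) ≤ 2 * M := by
    linarith [abs_le.mp (hM x), abs_le.mp (hM (x + f' x / B))]
  rw [div_le_iff₀ (by positivity)] at key
  linarith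

section Calculus

variable {E F H : Type*} [NormedAddCommGroup E] [NormedSpace ℝ E] [NormedAddCommGroup F]
  [NormedSpace ℝ F] [NormedAddCommGroup H] [NormedSpace ℝ H]

theorem DifferentiableAt.hasDerivAt_comp_add_smul {f : E → F} {x v : E} {t : ℝ}
    (hf : DifferentiableAt ℝ f (x + t • v)) :
    HasDerivAt (fun s : ℝ => f (x + s • v)) (fderiv ℝ f (x + t • v) v) t :=
  hf.hasFDerivAt.comp_hasDerivAt t (by simpa using ((hasDerivAt_id t).smul_const v).const_add x)

theorem DifferentiableAt.fderiv_partial_fst {T : E × F → H} {x : E} {y : F}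
    (hT : DifferentiableAt ℝ T (x, y)) :
    fderiv ℝ (fun x' => T (x', y)) x = (fderiv ℝ T (x, y)).comp (ContinuousLinearMap.inl ℝ E F) :=
  (hT.hasFDerivAt.comp x (hasFDerivAt_prodMk_left x y)).fderiv

theorem DifferentiableAt.fderiv_partial_snd {T : E × F → H} {x : E} {y : F}
    (hT : DifferentiableAt ℝ T (x, y)) :
    fderiv ℝ (fun y' => T (x, y')) y = (fderiv ℝ T (x, y)).comp (ContinuousLinearMap.inr ℝ E F) :=
  (hT.hasFDerivAt.comp y (hasFDerivAt_prodMk_right x y)).fderiv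

theorem DifferentiableAt.fderiv_apply_prod {T : E × F → H} {x : E} {y : F}
    (hT : DifferentiableAt ℝ T (x, y)) (a : E) (b : F) :
    fderiv ℝ T (x, y) (a, b) =
      fderiv ℝ (fun x' => T (x', y)) x a + fderiv ℝ (fun y' => T (x, y')) y b := by
  rw [hT.fderiv_partial_fst, hT.fderiv_partial_snd]
  simp [← map_add]

theorem Function.Periodic.fderiv {f : E → F} {c : E} (h : Periodic f c) :
    Periodic (fderiv ℝ f) c := fun x => by
  rw [← fderiv_comp_add_right, show (fun x => f (x + c)) = f from funext h]

theorem ContDiff.hasFDerivAt_fderiv {φ : E → F} (hφ : ContDiff ℝ 2 φ) (x : E) :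
    HasFDerivAt (fderiv ℝ φ) (fderiv ℝ (fderiv ℝ φ) x) x :=
  ((hφ.fderiv_right (m := 1) (by norm_num)).differentiable one_ne_zero x).hasFDerivAt

theorem sub_add_eq_of_hasFDerivAt_periodic {u : E → F} {u' : E → E →L[ℝ] F}
    (hu : ∀ x, HasFDerivAt u (u' x) x) {c : E} (hper : Periodic u' c) (x y : E) :
    u (x + c) - u x = u (y + c) - u y := by
  have hd : ∀ z, HasFDerivAt (fun z => u (z + c) - u z) 0 z := fun z => by
    have h := ((hu (z + c)).comp z ((hasFDerivAt_id z).add_const c)).fun_sub (hu z)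
    rwa [hper z, ContinuousLinearMap.comp_id, sub_self] at h
  exact is_const_of_fderiv_eq_zero (fun z => (hd z).differentiableAt) (fun z => (hd z).fderiv) x y

theorem IsLocalMin.hessian_nonneg {f : E → ℝ} {f' : E → E →L[ℝ] ℝ}
    {f'' : E →L[ℝ] E →L[ℝ] ℝ} {z : E} (hmin : IsLocalMin f z)
    (hf : ∀ x, HasFDerivAt f (f' x) x) (hf' : HasFDerivAt f' f'' z) (a : E) : 0 ≤ f'' a a := by
  have hline : ∀ t : ℝ, HasDerivAt (fun t : ℝ => z + t • a) a t := fun t => by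
    simpa using ((hasDerivAt_id t).smul_const a).const_add z
  have hz : z + (0 : ℝ) • a = z := by simp
  refine IsLocalMin.deriv2_nonneg_of_hasDerivAt (φ := fun t => f (z + t • a))
    (ρ := fun t => f' (z + t • a) a) (a := 0) ?_
    (fun t => (hf _).comp_hasDerivAt t (hline t)) ?_
  · rw [← hz] at hmin
    exact hmin.comp_continuous (g := fun t : ℝ => z + t • a) (by fun_prop)
  · rw [← hz] at hf'
    exact (ContinuousLinearMap.apply ℝ ℝ a).hasFDerivAt.comp_hasDerivAt 0
      (hf'.comp_hasDerivAt 0 (hline 0))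

theorem abs_mul_sq_fderiv_le_of_le_hessian {G : E → ℝ} (hG : ContDiff ℝ 2 G) {M B ε : ℝ}
    (hB : 0 < B) (hM : ∀ x, |G x| ≤ M) (v : E)
    (hlow : ∀ x, -B ≤ ε * fderiv ℝ (fderiv ℝ G) x v v) (x : E) :
    |ε| * fderiv ℝ G x v ^ 2 ≤ 4 * M * B := by
  have hf : ∀ s : ℝ, HasDerivAt (fun s => ε * G (x + s • v)) (ε * fderiv ℝ G (x + s • v) v) s :=
    fun s => ((hG.differentiable two_ne_zero _).hasDerivAt_comp_add_smul).const_mul ε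
  have hf' : ∀ s : ℝ, HasDerivAt (fun s => ε * fderiv ℝ G (x + s • v) v)
      (ε * fderiv ℝ (fderiv ℝ G) (x + s • v) v v) s := fun s =>
    ((ContinuousLinearMap.apply ℝ ℝ v).hasFDerivAt.comp_hasDerivAt s
      (hG.hasFDerivAt_fderiv _).differentiableAt.hasDerivAt_comp_add_smul).const_mul ε
  have hεM : ∀ s : ℝ, |ε * G (x + s • v)| ≤ |ε| * M := fun s => by
    rw [abs_mul]
    exact mul_le_mul_of_nonneg_left (hM _) (abs_nonneg ε)
  have h := sq_le_four_mul_of_abs_le_of_le_deriv2 hB hf hf' hεM (fun s => hlow _) 0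
  simp only [zero_smul, add_zero, mul_pow, ← sq_abs ε] at h
  rcases (abs_nonneg ε).eq_or_lt with hε | hε
  · rw [← hε, zero_mul]
    have := (abs_nonneg _).trans (hM x)
    positivity
  · nlinarith

end Calculus

section InnerProductSpace

open Real

variable {E : Type*} [NormedAddCommGroup E] [InnerProductSpace ℝ E]

def ellipseLoop (v w : E) (t : ℝ) : E := cos (2 * π * t) • v + sin (2 * π * t) • w

theorem hasDerivAt_ellipseLoop (v w : E) (t : ℝ) :
    HasDerivAt (ellipseLoop v w) ((2 * π) • ellipseLoop w (-v) t) t := by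
  have hlin : HasDerivAt (fun t : ℝ => 2 * π * t) (2 * π) t := by
    simpa using (hasDerivAt_id t).const_mul (2 * π)
  have h := (((hasDerivAt_cos _).comp t hlin).smul_const v).add
    (((hasDerivAt_sin _).comp t hlin).smul_const w)
  refine h.congr_deriv ?_
  simp only [ellipseLoop, smul_add, smul_neg, smul_smul]
  module

theorem contDiff_ellipseLoop (v w : E) : ContDiff ℝ 1 (ellipseLoop v w) := by
  unfold ellipseLoop
  fun_prop

theorem periodic_ellipseLoop (v w : E) : Periodic (ellipseLoop v w) 1 := fun t => by
  simp [ellipseLoop, mul_add, cos_add_two_pi, sin_add_two_pi]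

theorem norm_ellipseLoop_le (v w : E) (t : ℝ) : ‖ellipseLoop v w t‖ ≤ ‖v‖ + ‖w‖ := by
  unfold ellipseLoop
  refine (norm_add_le _ _).trans (add_le_add ?_ ?_) <;> rw [norm_smul] <;>
    refine mul_le_of_le_one_left (norm_nonneg _) ?_
  exacts [abs_cos_le_one _, abs_sin_le_one _]

theorem integral_inner_ellipseLoop (A : E →L[ℝ] E) (p : E) (s : ℝ) (v w : E) :
    ∫ t in (0 : ℝ)..1, ⟪p + s • A (ellipseLoop v w t), (2 * π) • ellipseLoop w (-v) t⟫ =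
      s * (π * (⟪A v, w⟫ - ⟪A w, v⟫)) := by
  set c' : ℝ → E := fun t => (2 * π) • ellipseLoop w (-v) t
  set P : ℝ → ℝ := fun t =>
    ⟪p, ellipseLoop v w t⟫ + s / 2 * ⟪A (ellipseLoop v w t), ellipseLoop v w t⟫
  set P' : ℝ → ℝ := fun t =>
    ⟪p, c' t⟫ + s / 2 * (⟪A (ellipseLoop v w t), c' t⟫ + ⟪A (c' t), ellipseLoop v w t⟫)
  have hc := hasDerivAt_ellipseLoop v w
  have hP : ∀ t, HasDerivAt P (P' t) t := fun t =>
    ((hasDerivAt_const t p).inner ℝ (hc t)).add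
      (((A.hasFDerivAt.comp_hasDerivAt t (hc t)).inner ℝ (hc t)).const_mul (s / 2))
      |>.congr_deriv (by simp [P', c'])
  have hP'c : Continuous P' := by
    have := (contDiff_ellipseLoop v w).continuous
    have := (contDiff_ellipseLoop w (-v)).continuous
    fun_prop
  have hsplit : ∀ t, ⟪p + s • A (ellipseLoop v w t), c' t⟫ =
      P' t + s * (π * (⟪A v, w⟫ - ⟪A w, v⟫)) := by
    intro t
    simp only [P', c', ellipseLoop, map_add, map_smul, inner_add_left, inner_add_right,
      real_inner_smul_left, real_inner_smul_right, inner_neg_left, inner_neg_right, map_neg]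
    linear_combination (s * π * (⟪A v, w⟫ - ⟪A w, v⟫)) * sin_sq_add_cos_sq (2 * π * t)
  rw [intervalIntegral.integral_congr (fun t _ => hsplit t),
    intervalIntegral.integral_add (hP'c.intervalIntegrable 0 1) intervalIntegrable_const,
    intervalIntegral.integral_eq_sub_of_hasDerivAt (fun t _ => hP t) (hP'c.intervalIntegrable 0 1)]
  simp [P, (periodic_ellipseLoop v w).eq]

theorem abs_integral_inner_ellipseLoop_sub_le {ν : E → E} (hν : Continuous ν) (A : E →L[ℝ] E)
    {q v w : E} {s η : ℝ}
    (hA : ∀ t, ‖ν (q + s • ellipseLoop v w t) - ν q - A (s • ellipseLoop v w t)‖ ≤ η) :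
    |(∫ t in (0 : ℝ)..1, ⟪ν (q + s • ellipseLoop v w t), (2 * π) • ellipseLoop w (-v) t⟫) -
      s * (π * (⟪A v, w⟫ - ⟪A w, v⟫))| ≤ η * (2 * π * (‖v‖ + ‖w‖)) := by
  set e : ℝ → E := fun t => ν (q + s • ellipseLoop v w t) - ν q - A (s • ellipseLoop v w t)
  have hc'N : ∀ t, ‖(2 * π) • ellipseLoop w (-v) t‖ ≤ 2 * π * (‖v‖ + ‖w‖) := fun t => by
    rw [norm_smul, Real.norm_of_nonneg (by positivity)]
    gcongr
    simpa [add_comm] using norm_ellipseLoop_le w (-v) t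
  have hpt : ∀ t, ⟪ν (q + s • ellipseLoop v w t), (2 * π) • ellipseLoop w (-v) t⟫ =
      ⟪ν q + s • A (ellipseLoop v w t), (2 * π) • ellipseLoop w (-v) t⟫ +
        ⟪e t, (2 * π) • ellipseLoop w (-v) t⟫ := fun t => by
    rw [← inner_add_left]
    congr 1
    simp only [e, map_smul]
    abel
  have hAc : Continuous A := A.continuous
  have hcont : Continuous (ellipseLoop v w) := (contDiff_ellipseLoop v w).continuous
  have hc'cont : Continuous (ellipseLoop w (-v)) := (contDiff_ellipseLoop w (-v)).continuous
  rw [intervalIntegral.integral_congr (fun t _ => hpt t), intervalIntegral.integral_add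
    (Continuous.intervalIntegrable (by fun_prop) _ _)
    (Continuous.intervalIntegrable (by fun_prop) _ _), integral_inner_ellipseLoop,
    add_sub_cancel_left, ← Real.norm_eq_abs]
  simpa using intervalIntegral.norm_integral_le_of_norm_le_const (a := 0) (b := 1)
    (f := fun t => ⟪e t, (2 * π) • ellipseLoop w (-v) t⟫) fun t _ =>
      (norm_inner_le_norm _ _).trans
        (mul_le_mul (hA t) (hc'N t) (norm_nonneg _) ((norm_nonneg _).trans (hA 0)))

theorem integral_inner_add_smul_ellipseLoop_eq_zero {ν : E → E}
    (hloop : ∀ c : ℝ → E, ContDiff ℝ 1 c → Periodic c 1 →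
      ∫ t in (0 : ℝ)..1, ⟪ν (c t), deriv c t⟫ = 0) (q v w : E) {s : ℝ} (hs : s ≠ 0) :
    ∫ t in (0 : ℝ)..1, ⟪ν (q + s • ellipseLoop v w t), (2 * π) • ellipseLoop w (-v) t⟫ = 0 := by
  have h := hloop (fun t => q + s • ellipseLoop v w t)
    (contDiff_const.add ((contDiff_ellipseLoop v w).const_smul s))
    (fun t => congrArg (q + s • ·) (periodic_ellipseLoop v w t))
  have hd : ∀ t, deriv (fun t => q + s • ellipseLoop v w t) t =
      s • (2 * π) • ellipseLoop w (-v) t := fun t =>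
    (((hasDerivAt_ellipseLoop v w t).const_smul s).const_add q).deriv
  simpa [hd, real_inner_smul_right, hs, pi_ne_zero] using h

theorem inner_fderiv_comm_of_forall_integral_loop_eq_zero {ν : E → E} (hν : Continuous ν)
    {q : E} (hνq : DifferentiableAt ℝ ν q)
    (hloop : ∀ c : ℝ → E, ContDiff ℝ 1 c → Periodic c 1 →
      ∫ t in (0 : ℝ)..1, ⟪ν (c t), deriv c t⟫ = 0) (v w : E) :
    ⟪fderiv ℝ ν q v, w⟫ = ⟪fderiv ℝ ν q w, v⟫ := by
  set A := fderiv ℝ ν q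
  set N := ‖v‖ + ‖w‖
  -- the loops `q + s • ellipseLoop v w` have zero circulation, the linear part of `ν` at `q`
  -- contributes `s π (⟪A v, w⟫ - ⟪A w, v⟫)` to it and the remainder is `o(s)`
  have hbound : ∀ η > 0, |⟪A v, w⟫ - ⟪A w, v⟫| ≤ η * (2 * N ^ 2) := by
    intro η hη
    obtain ⟨δ, hδ, hsmall⟩ := Metric.eventually_nhds_iff.mp
      ((hasFDerivAt_iff_isLittleO_nhds_zero.mp hνq.hasFDerivAt).def hη)
    set s := δ / (2 * (N + 1))
    have hs : 0 < s := by positivity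
    have hlin : ∀ t, ‖ν (q + s • ellipseLoop v w t) - ν q - A (s • ellipseLoop v w t)‖ ≤
        η * (s * N) := fun t => by
      have hsc : ‖s • ellipseLoop v w t‖ ≤ s * N := by
        rw [norm_smul, Real.norm_of_nonneg hs.le]
        exact mul_le_mul_of_nonneg_left (norm_ellipseLoop_le v w t) hs.le
      refine (hsmall ?_).trans (mul_le_mul_of_nonneg_left hsc hη.le)
      rw [dist_zero_right]
      refine hsc.trans_lt ?_
      simp only [s, div_mul_eq_mul_div, div_lt_iff₀ (by positivity : (0:ℝ) < 2 * (N + 1))]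
      nlinarith [norm_nonneg v, norm_nonneg w]
    have h := abs_integral_inner_ellipseLoop_sub_le hν A hlin
    rw [integral_inner_add_smul_ellipseLoop_eq_zero hloop q v w hs.ne', zero_sub, abs_neg,
      abs_mul, abs_of_pos hs, abs_mul, abs_of_pos pi_pos] at h
    refine le_of_mul_le_mul_left (a := s * π) ?_ (by positivity)
    linarith
  have hasymm : |⟪A v, w⟫ - ⟪A w, v⟫| ≤ 0 := le_of_forall_pos_le_add fun ε hε => by
    calc _ ≤ ε / (2 * N ^ 2 + 1) * (2 * N ^ 2) := hbound _ (by positivity)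
      _ ≤ 0 + ε := by
        rw [zero_add, div_mul_eq_mul_div, div_le_iff₀ (by positivity)]
        nlinarith
  exact sub_eq_zero.mp (abs_nonpos_iff.mp hasymm)

theorem exists_hasFDerivAt_innerSL_of_inner_fderiv_comm [CompleteSpace E] {ν : E → E}
    (hν : Differentiable ℝ ν) (hsymm : ∀ q v w, ⟪fderiv ℝ ν q v, w⟫ = ⟪fderiv ℝ ν q w, v⟫) :
    ∃ u : E → ℝ, ∀ x, HasFDerivAt u (innerSL ℝ (ν x)) x := by
  have hω : ∀ x, HasFDerivAt (fun x => innerSL ℝ (ν x)) ((innerSL ℝ).comp (fderiv ℝ ν x)) x :=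
    fun x => (innerSL ℝ).hasFDerivAt.comp x (hν x).hasFDerivAt
  obtain ⟨u, hu⟩ := convex_univ.exists_forall_hasFDerivAt_of_fderiv_symmetric isOpen_univ
    (fun x _ => (hω x).differentiableAt.differentiableWithinAt)
    (fun x _ v w => by simpa [(hω x).fderiv] using hsymm x v w)
  exact ⟨u, fun x => hu x (mem_univ x)⟩

theorem lipschitzWith_of_abs_inner_fderiv_le {ν : E → E} (hν : Differentiable ℝ ν)
    (hsymm : ∀ q v w, ⟪fderiv ℝ ν q v, w⟫ = ⟪fderiv ℝ ν q w, v⟫) {K : NNReal}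
    (hK : ∀ q v, |⟪fderiv ℝ ν q v, v⟫| ≤ K * ‖v‖ ^ 2) : LipschitzWith K ν := by
  refine lipschitzWith_of_nnnorm_fderiv_le hν fun q => ?_
  rw [← NNReal.coe_le_coe, coe_nnnorm, (fderiv ℝ ν q).norm_eq_iSup_rayleighQuotient
    fun v w => (hsymm q v w).trans (real_inner_comm _ _)]
  refine ciSup_le fun v => ?_
  rcases eq_or_ne v 0 with rfl | hv
  · simp
  rw [ContinuousLinearMap.rayleighQuotient, ContinuousLinearMap.reApplyInnerSelf_apply,
    abs_div, abs_of_pos (by positivity : 0 < ‖v‖ ^ 2), div_le_iff₀ (by positivity)]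
  exact hK q v

end InnerProductSpace
theorem exists_intVec_norm_le (q : Ed d) : ∃ m : Fin d → ℤ, ‖q + intVec d m‖ ≤ √d := by
  refine ⟨fun i => -⌊q i⌋, ?_⟩
  have hcoord : ∀ i, ‖(q + intVec d (fun i => -⌊q i⌋)) i‖ ^ 2 ≤ 1 := fun i => by
    have h : (q + intVec d (fun i => -⌊q i⌋)) i = Int.fract (q i) := by
      simp [intVec, Int.fract, sub_eq_add_neg]
    rw [h, Real.norm_eq_abs, sq_abs, sq_le_one_iff₀ (Int.fract_nonneg _)]
    exact (Int.fract_lt_one _).le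
  rw [EuclideanSpace.norm_eq]
  gcongr
  simpa using Finset.sum_le_sum fun i (_ : i ∈ Finset.univ) => hcoord i

theorem Continuous.exists_norm_le_of_zdPeriodic {Y : Type*} [SeminormedAddCommGroup Y]
    {f : Ed d → Y} (hf : Continuous f) (hper : ∀ m, Periodic f (intVec d m)) :
    ∃ M, 0 ≤ M ∧ ∀ q, ‖f q‖ ≤ M := by
  obtain ⟨M, hM⟩ := (isCompact_closedBall (0 : Ed d) √d).exists_bound_of_continuousOn
    hf.continuousOn
  refine ⟨max M 0, le_max_right _ _, fun q => ?_⟩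
  obtain ⟨m, hm⟩ := exists_intVec_norm_le q
  rw [← hper m q]
  exact (hM _ (mem_closedBall_zero_iff.mpr hm)).trans (le_max_left _ _)

theorem Continuous.exists_forall_le_of_diag_periodic {h : Ed d × Ed d → ℝ} (hc : Continuous h)
    (hper : ∀ m, Periodic h (intVec d m, intVec d m))
    (hcoer : ∀ c, ∃ R, ∀ q Q, R < ‖Q - q‖ → c ≤ h (q, Q)) :
    ∃ z, ∀ x, h z ≤ h x := by
  obtain ⟨R, hR⟩ := hcoer (h 0)
  set K := closedBall (0 : Ed d) √d ×ˢ closedBall (0 : Ed d) (|R| + √d)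
  have h0K : (0 : Ed d × Ed d) ∈ K := ⟨mem_closedBall_self (by positivity),
    mem_closedBall_self (by positivity)⟩
  obtain ⟨z, -, hz⟩ := (isCompact_closedBall _ _).prod (isCompact_closedBall _ _)
    |>.exists_isMinOn ⟨0, h0K⟩ hc.continuousOn
  refine ⟨z, fun x => ?_⟩
  obtain ⟨m, hm⟩ := exists_intVec_norm_le x.1
  rw [← hper m x]
  set x' := x + (intVec d m, intVec d m)
  by_cases hfar : R < ‖x'.2 - x'.1‖
  · exact (hz h0K).trans (hR x'.1 x'.2 hfar)
  · refine hz ⟨mem_closedBall_zero_iff.mpr hm, mem_closedBall_zero_iff.mpr ?_⟩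
    calc ‖x'.2‖ = ‖(x'.2 - x'.1) + x'.1‖ := by rw [sub_add_cancel]
      _ ≤ ‖x'.2 - x'.1‖ + ‖x'.1‖ := norm_add_le _ _
      _ ≤ |R| + √d := add_le_add ((not_lt.mp hfar).trans (le_abs_self R)) hm

theorem fderiv_partial_fst_apply_le_of_mixedS_le {T : Ed d × Ed d → ℝ} (hT : ContDiff ℝ 2 T)
    {α : ℝ} (hα : ∀ q Q v, mixedS T q Q v ≤ -α * ‖v‖ ^ 2) (q Q w : Ed d) {t : ℝ} (ht : 0 ≤ t) :
    fderiv ℝ (fun q' => T (q', Q + t • w)) q w ≤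
      fderiv ℝ (fun q' => T (q', Q)) q w - α * t * ‖w‖ ^ 2 := by
  set Ψ : Ed d → ℝ := fun Q' => fderiv ℝ (fun q' => T (q', Q')) q w
  have hΨ : Differentiable ℝ Ψ := by
    have hΨeq : Ψ = fun Q' => fderiv ℝ T (q, Q') (w, 0) := funext fun Q' => by
      simp [Ψ, (hT.differentiable two_ne_zero _).fderiv_partial_fst]
    rw [hΨeq]
    exact (((hT.fderiv_right (m := 1) (by norm_num)).differentiable one_ne_zero).comp
      (by fun_prop)).clm_apply (differentiable_const _)
  have hk : ∀ s : ℝ, HasDerivAt (fun s : ℝ => Ψ (Q + s • w)) (mixedS T q (Q + s • w) w) s :=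
    fun s => (hΨ _).hasDerivAt_comp_add_smul
  have := image_sub_le_mul_sub_of_deriv_le (fun s => (hk s).differentiableAt)
    (fun s => (hk s).deriv ▸ hα _ _ _) ht
  simp only [Ψ, zero_smul, add_zero, sub_zero] at this
  linarith

theorem le_apply_of_mixedS_le {T : Ed d × Ed d → ℝ} (hT : ContDiff ℝ 2 T) {α : ℝ}
    (hα : ∀ q Q v, mixedS T q Q v ≤ -α * ‖v‖ ^ 2) {C : ℝ}
    (hC : ∀ x, ‖fderiv ℝ T (x, x)‖ ≤ C) (q Q : Ed d) :
    T (Q, Q) - C * ‖Q - q‖ + α / 2 * ‖Q - q‖ ^ 2 ≤ T (q, Q) := by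
  set w := Q - q
  have hdiag : ∀ p : Ed d, fderiv ℝ (fun q' => T (q', p)) p w ≤ C * ‖w‖ := fun p => by
    rw [(hT.differentiable two_ne_zero _).fderiv_partial_fst]
    calc fderiv ℝ T (p, p) (w, 0) ≤ ‖fderiv ℝ T (p, p)‖ * ‖((w, 0) : Ed d × Ed d)‖ :=
          (le_abs_self _).trans ((fderiv ℝ T (p, p)).le_opNorm _)
      _ ≤ C * ‖w‖ := by simpa using mul_le_mul_of_nonneg_right (hC p) (norm_nonneg w)
  -- along `t ↦ q + t • w` we have `∂_q T (q + t • w, Q) w ≤ C ‖w‖ - α (1 - t) ‖w‖ ^ 2`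
  set ψ : ℝ → ℝ := fun t => T (q + t • w, Q) - C * ‖w‖ * t + α * ‖w‖ ^ 2 * (t - t ^ 2 / 2)
  have hψ : ∀ t, HasDerivAt ψ (fderiv ℝ (fun q' => T (q', Q)) (q + t • w) w - C * ‖w‖
      + α * ‖w‖ ^ 2 * (1 - t)) t := fun t => by
    have hTQ : Differentiable ℝ fun q' => T (q', Q) :=
      (hT.differentiable two_ne_zero).comp (differentiable_id.prodMk (differentiable_const Q))
    have h1 := (hTQ (q + t • w)).hasDerivAt_comp_add_smul
    have h2 := ((hasDerivAt_id t).sub ((hasDerivAt_pow 2 t).div_const 2)).const_mul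
      (α * ‖w‖ ^ 2)
    exact ((h1.sub ((hasDerivAt_id t).const_mul (C * ‖w‖))).add h2).congr_deriv (by simp)
  have hψ' : ∀ t ∈ Icc (0 : ℝ) 1, fderiv ℝ (fun q' => T (q', Q)) (q + t • w) w - C * ‖w‖
      + α * ‖w‖ ^ 2 * (1 - t) ≤ 0 := fun t ht => by
    have hQ : Q = (q + t • w) + (1 - t) • w := by simp only [w, sub_smul, one_smul]; abel
    have := fderiv_partial_fst_apply_le_of_mixedS_le hT hα (q + t • w) (q + t • w) w
      (sub_nonneg.mpr ht.2)
    rw [← hQ] at this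
    linarith [hdiag (q + t • w)]
  have hanti : AntitoneOn ψ (Icc 0 1) := antitoneOn_of_deriv_nonpos (convex_Icc 0 1)
    (fun t _ => (hψ t).continuousAt.continuousWithinAt)
    (fun t _ => (hψ t).differentiableAt.differentiableWithinAt)
    (fun t ht => (hψ t).deriv ▸ hψ' t (interior_subset ht))
  have h01 := hanti (left_mem_Icc.mpr zero_le_one) (right_mem_Icc.mpr zero_le_one) zero_le_one
  simp only [ψ, one_smul, zero_smul, add_zero, w, add_sub_cancel] at h01
  linarith

theorem pairing_eq_inner (p v : Ed d) : pairing p v = ⟪p, v⟫ := by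
  simp [pairing, PiLp.inner_apply, mul_comm]

theorem IsLagrangianGraph.inner_fderiv_comm {ν : Ed d → Ed d} (hL : IsLagrangianGraph ν)
    (hν : ContDiff ℝ 1 ν) (q v w : Ed d) : ⟪fderiv ℝ ν q v, w⟫ = ⟪fderiv ℝ ν q w, v⟫ :=
  inner_fderiv_comm_of_forall_integral_loop_eq_zero hν.continuous (hν.differentiable one_ne_zero q)
    (fun c hc hper => by simpa only [pairing_eq_inner] using hL c hc hper) v w

theorem IsLagrangianGraph.exists_potential {ν : Ed d → Ed d} (hL : IsLagrangianGraph ν)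
    (hν : ContDiff ℝ 1 ν) : ∃ u : Ed d → ℝ, ∀ x, HasFDerivAt u (innerSL ℝ (ν x)) x :=
  exists_hasFDerivAt_innerSL_of_inner_fderiv_comm (hν.differentiable one_ne_zero)
    (hL.inner_fderiv_comm hν)

theorem snd_eq_of_image_graphSet_subset {Φ : Ed d × Ed d → Ed d × Ed d} {ν : Ed d → Ed d}
    (hinv : Φ '' graphSet ν ⊆ graphSet ν) (q : Ed d) : (Φ (q, ν q)).2 = ν (Φ (q, ν q)).1 :=
  hinv (mem_image_of_mem Φ (show (q, ν q) ∈ graphSet ν from rfl))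

theorem exists_fst_eq_of_graphSet_subset_image {Φ : Ed d × Ed d → Ed d × Ed d}
    {ν : Ed d → Ed d} (hinv : graphSet ν ⊆ Φ '' graphSet ν) (Q : Ed d) :
    ∃ q, (Φ (q, ν q)).1 = Q := by
  obtain ⟨x, hx, hxQ⟩ := hinv (show (Q, ν Q) ∈ graphSet ν from rfl)
  refine ⟨x.1, ?_⟩
  rw [show (x.1, ν x.1) = x from Prod.ext rfl hx.symm, hxQ]

def modifiedAction (T : Ed d × Ed d → ℝ) (u : Ed d → ℝ) (x : Ed d × Ed d) : ℝ :=
  T x + u x.1 - u x.2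

theorem exists_le_modifiedAction_of_lt_norm_sub {T : Ed d × Ed d → ℝ} (hT : ContDiff ℝ 2 T)
    {α : ℝ} (hα0 : 0 < α) (hα : ∀ q Q v, mixedS T q Q v ≤ -α * ‖v‖ ^ 2)
    (hTper : ∀ (m : Fin d → ℤ) (q Q : Ed d), T (q + intVec d m, Q + intVec d m) = T (q, Q))
    {ν : Ed d → Ed d} (hν : Continuous ν) (hper : ZdPeriodic ν) {u : Ed d → ℝ}
    (hu : ∀ x, HasFDerivAt u (innerSL ℝ (ν x)) x) (c : ℝ) :
    ∃ R, ∀ q Q, R < ‖Q - q‖ → c ≤ modifiedAction T u (q, Q) := by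
  have hDT := hT.continuous_fderiv two_ne_zero
  have hTc := hT.continuous
  obtain ⟨C₁, -, hC₁⟩ := (by fun_prop : Continuous fun x : Ed d => fderiv ℝ T (x, x))
    |>.exists_norm_le_of_zdPeriodic fun m x =>
      Periodic.fderiv (c := (intVec d m, intVec d m)) (fun z => hTper m z.1 z.2) (x, x)
  obtain ⟨C₀, hC₀0, hC₀⟩ := (by fun_prop : Continuous fun x : Ed d => T (x, x))
    |>.exists_norm_le_of_zdPeriodic fun m x => hTper m x x
  obtain ⟨Mν, -, hMν⟩ := hν.exists_norm_le_of_zdPeriodic hper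
  have hulip : ∀ q Q, ‖u Q - u q‖ ≤ Mν * ‖Q - q‖ := fun q Q =>
    convex_univ.norm_image_sub_le_of_norm_hasFDerivWithin_le
      (fun x _ => (hu x).hasFDerivWithinAt)
      (fun x _ => (innerSL_apply_norm ℝ (ν x)).trans_le (hMν x)) (mem_univ q) (mem_univ Q)
  refine ⟨max 1 (2 / α * (C₁ + Mν + C₀ + |c|)), fun q Q hR => ?_⟩
  have hr1 : 1 ≤ ‖Q - q‖ := (le_max_left _ _).trans hR.le
  have hr2 : C₁ + Mν + C₀ + |c| ≤ α / 2 * ‖Q - q‖ := by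
    have := (le_max_right _ _).trans hR.le
    rw [div_mul_eq_mul_div, div_le_iff₀ hα0] at this
    linarith
  have h1 := mul_le_mul_of_nonneg_right hr2 (norm_nonneg (Q - q))
  have h2 := mul_le_mul_of_nonneg_left hr1 (add_nonneg hC₀0 (abs_nonneg c))
  have h3 := le_apply_of_mixedS_le hT hα hC₁ q Q
  have h4 := (abs_le.mp (Real.norm_eq_abs _ ▸ hC₀ Q)).1
  have h5 := (abs_le.mp (Real.norm_eq_abs _ ▸ hulip q Q)).2
  simp only [modifiedAction]
  linarith [le_abs_self c]

theorem exists_forall_modifiedAction_le {T : Ed d × Ed d → ℝ} (hT : ContDiff ℝ 2 T) {α : ℝ}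
    (hα0 : 0 < α) (hα : ∀ q Q v, mixedS T q Q v ≤ -α * ‖v‖ ^ 2)
    (hTper : ∀ (m : Fin d → ℤ) (q Q : Ed d), T (q + intVec d m, Q + intVec d m) = T (q, Q))
    {ν : Ed d → Ed d} (hν : Continuous ν) (hper : ZdPeriodic ν) {u : Ed d → ℝ}
    (hu : ∀ x, HasFDerivAt u (innerSL ℝ (ν x)) x) :
    ∃ z, ∀ x, modifiedAction T u z ≤ modifiedAction T u x := by
  refine Continuous.exists_forall_le_of_diag_periodic ?_ (fun m x => ?_)
    (exists_le_modifiedAction_of_lt_norm_sub hT hα0 hα hTper hν hper hu)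
  · have hTc := hT.continuous
    have hu' : Continuous u := continuous_iff_continuousAt.mpr fun x => (hu x).continuousAt
    unfold modifiedAction
    fun_prop
  · have := sub_add_eq_of_hasFDerivAt_periodic hu (c := intVec d m)
      (fun y => by simp only [hper m y]) x.1 x.2
    have hTx : T (x + (intVec d m, intVec d m)) = T x := hTper m x.1 x.2
    simp only [modifiedAction, Prod.fst_add, Prod.snd_add, hTx]
    linarith

section InvariantGraph

variable {Φ : Ed d × Ed d → Ed d × Ed d} {T : Ed d × Ed d → ℝ} {ν : Ed d → Ed d}
  {u : Ed d → ℝ}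

theorem IsSymplecticTwistLift.hasFDerivAt_modifiedAction_graph (hΦ : IsSymplecticTwistLift Φ T)
    (hT : ContDiff ℝ 2 T) (hν : ContDiff ℝ 1 ν) (hu : ∀ x, HasFDerivAt u (innerSL ℝ (ν x)) x)
    (hgraph : ∀ q, (Φ (q, ν q)).2 = ν (Φ (q, ν q)).1) (q : Ed d) :
    HasFDerivAt (fun q => modifiedAction T u (q, (Φ (q, ν q)).1)) (0 : Ed d →L[ℝ] ℝ) q := by
  set g := fun q => (Φ (q, ν q)).1
  have hΦ1 := hΦ.diffeo.1
  have hg : HasFDerivAt g (fderiv ℝ g q) q :=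
    ((by fun_prop : ContDiff ℝ 1 g).differentiable one_ne_zero q).hasFDerivAt
  have hTd : DifferentiableAt ℝ T (q, g q) := hT.differentiable two_ne_zero _
  have h := ((hTd.hasFDerivAt.comp q ((hasFDerivAt_id q).prodMk hg)).add (hu q)).sub
    ((hu (g q)).comp q hg)
  refine h.congr_fderiv (ContinuousLinearMap.ext fun a => ?_)
  have hdq := hΦ.genfun.dq q (ν q) a
  have hdQ := hΦ.genfun.dQ q (ν q) (fderiv ℝ g q a)
  rw [pairing_eq_inner] at hdq
  rw [pairing_eq_inner, hgraph] at hdQ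
  simp only [add_apply, sub_apply, ContinuousLinearMap.comp_apply,
    ContinuousLinearMap.prod_apply, ContinuousLinearMap.id_apply, innerSL_apply_apply,
    hTd.fderiv_apply_prod, zero_apply, g] at hdQ ⊢
  linarith

theorem IsSymplecticTwistLift.snd_eq_of_isMin_modifiedAction (hΦ : IsSymplecticTwistLift Φ T)
    (hT : ContDiff ℝ 2 T) {α : ℝ} (hα0 : 0 < α) (hα : ∀ q Q v, mixedS T q Q v ≤ -α * ‖v‖ ^ 2)
    (hu : ∀ x, HasFDerivAt u (innerSL ℝ (ν x)) x) {z : Ed d × Ed d}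
    (hz : ∀ x, modifiedAction T u z ≤ modifiedAction T u x) : z.2 = (Φ (z.1, ν z.1)).1 := by
  set Q := (Φ (z.1, ν z.1)).1
  set w := z.2 - Q
  -- `∂_q T (z.1, ·)` takes the same value `-⟪ν z.1, ·⟫` at `z.2` (criticality) and at `Q` (the
  -- generating function), while the twist makes `Q' ↦ ∂_q T (z.1, Q') w` strictly decreasing
  have hTd := hT.differentiable two_ne_zero
  have hTz : DifferentiableAt ℝ (fun q => T (q, z.2)) z.1 := by fun_prop
  have hcrit := IsLocalMin.hasFDerivAt_eq_zero (f := fun q => modifiedAction T u (q, z.2))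
    (Eventually.of_forall fun q => hz (q, z.2))
    ((hTz.hasFDerivAt.fun_add (hu z.1)).sub_const (u z.2))
  have hz2 : fderiv ℝ (fun q => T (q, z.2)) z.1 w = -⟪ν z.1, w⟫ := by
    simpa [add_eq_zero_iff_eq_neg] using congrArg (· w) hcrit
  have hQ : fderiv ℝ (fun q => T (q, Q)) z.1 w = -⟪ν z.1, w⟫ := by
    rw [hΦ.genfun.dq z.1 (ν z.1) w, pairing_eq_inner]
  have hmono := fderiv_partial_fst_apply_le_of_mixedS_le hT hα z.1 Q w zero_le_one
  rw [one_smul, add_sub_cancel, hz2, hQ] at hmono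
  have hw : ‖w‖ ^ 2 ≤ 0 := le_of_mul_le_mul_left (by linarith) hα0
  exact sub_eq_zero.mp (norm_eq_zero.mp ((sq_nonpos_iff _).mp hw))

theorem IsSymplecticTwistLift.modifiedAction_graph_le (hΦ : IsSymplecticTwistLift Φ T)
    (hT : PositiveGenFun T) (hν : ContDiff ℝ 1 ν) (hper : ZdPeriodic ν)
    (hu : ∀ x, HasFDerivAt u (innerSL ℝ (ν x)) x)
    (hgraph : ∀ q, (Φ (q, ν q)).2 = ν (Φ (q, ν q)).1) (q : Ed d) (x : Ed d × Ed d) :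
    modifiedAction T u (q, (Φ (q, ν q)).1) ≤ modifiedAction T u x := by
  obtain ⟨hT2, α, hα0, hα⟩ := hT
  obtain ⟨z, hz⟩ := exists_forall_modifiedAction_le hT2 hα0 hα hΦ.genfun.periodic hν.continuous
    hper hu
  have hconst := is_const_of_fderiv_eq_zero
    (fun q => (hΦ.hasFDerivAt_modifiedAction_graph hT2 hν hu hgraph q).differentiableAt)
    (fun q => (hΦ.hasFDerivAt_modifiedAction_graph hT2 hν hu hgraph q).fderiv) q z.1
  rw [hconst, ← hΦ.snd_eq_of_isMin_modifiedAction hT2 hα0 hα hu hz]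
  exact hz x

theorem IsSymplecticTwistLift.hessian_bounds_of_invariant_graph
    (hΦ : IsSymplecticTwistLift Φ T) (hT : PositiveGenFun T) (hν : ContDiff ℝ 1 ν)
    (hper : ZdPeriodic ν) (hL : IsLagrangianGraph ν) (hinv : Φ '' graphSet ν ⊆ graphSet ν)
    (q v : Ed d) :
    ⟪fderiv ℝ ν (Φ (q, ν q)).1 v, v⟫ ≤ hessQQ T q (Φ (q, ν q)).1 v v ∧
      -hessqq T q (Φ (q, ν q)).1 v v ≤ ⟪fderiv ℝ ν q v, v⟫ := by
  obtain ⟨u, hu⟩ := hL.exists_potential hν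
  have hmin := hΦ.modifiedAction_graph_le hT hν hper hu (snd_eq_of_image_graphSet_subset hinv) q
  set Q := (Φ (q, ν q)).1
  have hT2 := hT.1
  have hdν : ∀ x, HasFDerivAt (fun x => innerSL ℝ (ν x)) ((innerSL ℝ).comp (fderiv ℝ ν x)) x :=
    fun x => (innerSL ℝ).hasFDerivAt.comp x ((hν.differentiable one_ne_zero) x).hasFDerivAt
  constructor
  · have hTq : ContDiff ℝ 2 fun Q' => T (q, Q') := by fun_prop
    have h := IsLocalMin.hessian_nonneg (f := fun Q' => modifiedAction T u (q, Q'))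
      (f' := fun Q' => fderiv ℝ (fun Q'' => T (q, Q'')) Q' - innerSL ℝ (ν Q'))
      (Eventually.of_forall fun Q' => hmin (q, Q'))
      (fun Q' => ((hTq.differentiable two_ne_zero Q').hasFDerivAt.add_const (u q)).fun_sub
        (hu Q'))
      ((hTq.hasFDerivAt_fderiv Q).sub (hdν Q)) v
    simpa [sub_nonneg, hessQQ] using h
  · have hTQ : ContDiff ℝ 2 fun q' => T (q', Q) := by fun_prop
    have h := IsLocalMin.hessian_nonneg (f := fun q' => modifiedAction T u (q', Q))
      (f' := fun q' => fderiv ℝ (fun q'' => T (q'', Q)) q' + innerSL ℝ (ν q'))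
      (Eventually.of_forall fun q' => hmin (q', Q))
      (fun q' => ((hTQ.differentiable two_ne_zero q').hasFDerivAt.fun_add (hu q')).sub_const
        (u Q))
      ((hTQ.hasFDerivAt_fderiv q).add (hdν q)) v
    have hhess : hessqq T q Q = fderiv ℝ (fderiv ℝ fun q' => T (q', Q)) q := rfl
    simp only [add_apply, ContinuousLinearMap.comp_apply, innerSL_apply_apply] at h
    linarith [hhess ▸ h]

end InvariantGraph

section Perturbation

variable {S : Ed d × Ed d → ℝ} {G : Ed d → ℝ}

theorem mixedS_add_mul_fst (hS : ContDiff ℝ 2 S) (hG : ContDiff ℝ 2 G) (ε : ℝ) (q Q v : Ed d) :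
    mixedS (fun x => S x + ε * G x.1) q Q v = mixedS S q Q v := by
  have hSd := hS.differentiable two_ne_zero
  have hGd := hG.differentiable two_ne_zero
  have h : (fun Q' => fderiv ℝ (fun q' => S (q', Q') + ε * G q') q v) =
      fun Q' => fderiv ℝ (fun q' => S (q', Q')) q v + ε * fderiv ℝ G q v := funext fun Q' => by
    rw [fderiv_fun_add (by fun_prop) (by fun_prop), fderiv_const_mul (hGd q)]
    rfl
  simp only [mixedS, h, fderiv_add_const]

theorem hessqq_add_mul_fst (hS : ContDiff ℝ 2 S) (hG : ContDiff ℝ 2 G) (ε : ℝ) (q Q : Ed d) :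
    hessqq (fun x => S x + ε * G x.1) q Q = hessqq S q Q + ε • fderiv ℝ (fderiv ℝ G) q := by
  have hSQ : ContDiff ℝ 2 fun q' => S (q', Q) := by fun_prop
  have h : (fun q' => fderiv ℝ (fun q'' => S (q'', Q) + ε * G q'') q') =
      fun q' => fderiv ℝ (fun q'' => S (q'', Q)) q' + ε • fderiv ℝ G q' := funext fun q' => by
    rw [fderiv_fun_add ((hSQ.differentiable two_ne_zero) q')
      (((hG.differentiable two_ne_zero) q').const_mul ε), fderiv_const_mul
      ((hG.differentiable two_ne_zero) q')]
  simp only [hessqq, h]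
  exact ((hSQ.hasFDerivAt_fderiv q).add ((hG.hasFDerivAt_fderiv q).const_smul ε)).fderiv

theorem hessQQ_add_mul_fst (ε : ℝ) (q Q : Ed d) :
    hessQQ (fun x => S x + ε * G x.1) q Q = hessQQ S q Q := by
  simp only [hessQQ, fderiv_add_const]

theorem StronglyPositiveGenFun.positiveGenFun_add_mul_fst (hS : StronglyPositiveGenFun S)
    (hG : ContDiff ℝ 2 G) (ε : ℝ) : PositiveGenFun fun x => S x + ε * G x.1 := by
  obtain ⟨hS2, α, _β, hα0, -, hα⟩ := hS
  refine ⟨by fun_prop, α, hα0, fun q Q v => ?_⟩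
  rw [mixedS_add_mul_fst hS2 hG]
  exact (hα q Q v).2

end Perturbation

theorem inner_fderiv_bounds_of_invariant_graph {S : Ed d × Ed d → ℝ} {G : Ed d → ℝ}
    (hS : StronglyPositiveGenFun S) (hG : ContDiff ℝ 2 G) {C : ℝ}
    (hC : ∀ q Q, ‖hessqq S q Q‖ + ‖hessQQ S q Q‖ ≤ C) {ε : ℝ} {Φ : Ed d × Ed d → Ed d × Ed d}
    (hΦ : IsSymplecticTwistLift Φ fun x => S x + ε * G x.1) {ν : Ed d → Ed d}
    (hν : ContDiff ℝ 1 ν) (hper : ZdPeriodic ν) (hL : IsLagrangianGraph ν)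
    (hinv : Φ '' graphSet ν = graphSet ν) :
    (∀ Q v, ⟪fderiv ℝ ν Q v, v⟫ ≤ C * ‖v‖ ^ 2) ∧
      ∀ q v, -(C * ‖v‖ ^ 2) - ε * fderiv ℝ (fderiv ℝ G) q v v ≤ ⟪fderiv ℝ ν q v, v⟫ := by
  have hbounds := hΦ.hessian_bounds_of_invariant_graph (hS.positiveGenFun_add_mul_fst hG ε) hν
    hper hL hinv.subset
  have hquad : ∀ (B : Ed d →L[ℝ] Ed d →L[ℝ] ℝ) v, B v v ≤ ‖B‖ * ‖v‖ ^ 2 := fun B v =>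
    (le_abs_self _).trans ((B.le_opNorm₂ v v).trans_eq (by ring))
  constructor
  · intro Q v
    obtain ⟨q, rfl⟩ := exists_fst_eq_of_graphSet_subset_image hinv.symm.subset Q
    have h := (hbounds q v).1
    rw [hessQQ_add_mul_fst] at h
    have := hquad (hessQQ S q (Φ (q, ν q)).1) v
    nlinarith [hC q (Φ (q, ν q)).1, norm_nonneg (hessqq S q (Φ (q, ν q)).1), sq_nonneg ‖v‖]
  · intro q v
    have h := (hbounds q v).2
    rw [hessqq_add_mul_fst hS.1 hG] at h
    have := hquad (hessqq S q (Φ (q, ν q)).1) v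
    simp only [add_apply, smul_apply, smul_eq_mul] at h
    nlinarith [hC q (Φ (q, ν q)).1, norm_nonneg (hessQQ S q (Φ (q, ν q)).1), sq_nonneg ‖v‖]

theorem abs_inner_fderiv_le_of_invariant_graph {S : Ed d × Ed d → ℝ} {G : Ed d → ℝ}
    (hS : StronglyPositiveGenFun S) (hG : ContDiff ℝ 2 G) {C Γ ε ε₀ : ℝ}
    (hC : ∀ q Q, ‖hessqq S q Q‖ + ‖hessQQ S q Q‖ ≤ C)
    (hΓ : ∀ q, ‖fderiv ℝ (fderiv ℝ G) q‖ ≤ Γ) (hε : |ε| ≤ ε₀) {Φ : Ed d × Ed d → Ed d × Ed d}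
    (hΦ : IsSymplecticTwistLift Φ fun x => S x + ε * G x.1) {ν : Ed d → Ed d}
    (hν : ContDiff ℝ 1 ν) (hper : ZdPeriodic ν) (hL : IsLagrangianGraph ν)
    (hinv : Φ '' graphSet ν = graphSet ν) (q v : Ed d) :
    |⟪fderiv ℝ ν q v, v⟫| ≤ (C + ε₀ * Γ) * ‖v‖ ^ 2 := by
  obtain ⟨hup, hlow⟩ := inner_fderiv_bounds_of_invariant_graph hS hG hC hΦ hν hper hL hinv
  have hG2 : |ε * fderiv ℝ (fderiv ℝ G) q v v| ≤ ε₀ * (Γ * ‖v‖ ^ 2) := by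
    rw [abs_mul]
    refine mul_le_mul hε ?_ (abs_nonneg _) ((abs_nonneg ε).trans hε)
    calc |fderiv ℝ (fderiv ℝ G) q v v| ≤ ‖fderiv ℝ (fderiv ℝ G) q‖ * ‖v‖ * ‖v‖ :=
          (fderiv ℝ (fderiv ℝ G) q).le_opNorm₂ v v
      _ ≤ Γ * ‖v‖ ^ 2 := by nlinarith [hΓ q, norm_nonneg v]
  have hεΓ : 0 ≤ ε₀ * Γ :=
    mul_nonneg ((abs_nonneg ε).trans hε) ((norm_nonneg (fderiv ℝ (fderiv ℝ G) q)).trans (hΓ q))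
  rw [abs_le]
  constructor <;> nlinarith [hup q v, hlow q v, abs_le.mp hG2, sq_nonneg ‖v‖]

theorem abs_mul_sq_fderiv_le_of_invariant_graph {S : Ed d × Ed d → ℝ} {G : Ed d → ℝ}
    (hS : StronglyPositiveGenFun S) (hG : ContDiff ℝ 2 G) {C M ε : ℝ}
    (hC : ∀ q Q, ‖hessqq S q Q‖ + ‖hessQQ S q Q‖ ≤ C) (hM : ∀ x, |G x| ≤ M)
    {Φ : Ed d × Ed d → Ed d × Ed d} (hΦ : IsSymplecticTwistLift Φ fun x => S x + ε * G x.1)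
    {ν : Ed d → Ed d} (hν : ContDiff ℝ 1 ν) (hper : ZdPeriodic ν) (hL : IsLagrangianGraph ν)
    (hinv : Φ '' graphSet ν = graphSet ν) (q v : Ed d) :
    |ε| * fderiv ℝ G q v ^ 2 ≤ 4 * M * (2 * C * ‖v‖ ^ 2 + 1) := by
  obtain ⟨hup, hlow⟩ := inner_fderiv_bounds_of_invariant_graph hS hG hC hΦ hν hper hL hinv
  have hC0 : 0 ≤ C := by linarith [hC 0 0, norm_nonneg (hessqq S 0 0), norm_nonneg (hessQQ S 0 0)]
  exact abs_mul_sq_fderiv_le_of_le_hessian hG (by positivity) hM v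
    (fun x => by linarith [hup x v, hlow x v]) q

theorem statement19_general (d : ℕ) (S : Ed d × Ed d → ℝ)
    (G : Ed d → ℝ) (hGreg : ContDiff ℝ 2 G) (hGper : ZdPeriodicFun G)
    (Fε : ℝ → Ed d × Ed d → Ed d × Ed d)
    (hfam : ∀ ε : ℝ, IsSymplecticTwistLift (Fε ε) fun x => S x + ε * G x.1)
    (hpos : StronglyPositiveGenFun S)
    (hrate : BoundedRateGenFun S) :
    (∀ ε₀ : ℝ, 0 ≤ ε₀ → ∃ K : NNReal, ∀ ε : ℝ, |ε| ≤ ε₀ →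
      ∀ ν : Ed d → Ed d, ContDiff ℝ 1 ν → ZdPeriodic ν → IsLagrangianGraph ν →
        (Fε ε) '' graphSet ν = graphSet ν → LipschitzWith K ν) ∧
    ((∃ q q' : Ed d, G q ≠ G q') → ∃ Λ : ℝ, 0 < Λ ∧ ∀ ε : ℝ, Λ ≤ |ε| →
      ¬ ∃ ν : Ed d → Ed d, ContDiff ℝ 1 ν ∧ ZdPeriodic ν ∧ IsLagrangianGraph ν ∧
        (Fε ε) '' graphSet ν = graphSet ν) := by
  obtain ⟨-, C, hC⟩ := hrate
  have hC0 : 0 ≤ C := by linarith [hC 0 0, norm_nonneg (hessqq S 0 0), norm_nonneg (hessQQ S 0 0)]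
  obtain ⟨Γ, hΓ0, hΓ⟩ := ((hGreg.fderiv_right (m := 1) (by norm_num)).continuous_fderiv
    one_ne_zero).exists_norm_le_of_zdPeriodic fun m => (Function.Periodic.fderiv (hGper m)).fderiv
  obtain ⟨M, hM0, hM⟩ := hGreg.continuous.exists_norm_le_of_zdPeriodic hGper
  constructor
  · refine fun ε₀ hε₀ => ⟨(C + ε₀ * Γ).toNNReal, fun ε hε ν hν hper hL hinv =>
      lipschitzWith_of_abs_inner_fderiv_le (hν.differentiable one_ne_zero)
        (hL.inner_fderiv_comm hν) fun q v => ?_⟩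
    rw [Real.coe_toNNReal _ (by positivity)]
    exact abs_inner_fderiv_le_of_invariant_graph hpos hGreg hC hΓ hε (hfam ε) hν hper hL hinv q v
  · rintro ⟨q₀, q₀', hne⟩
    obtain ⟨q₁, v, hv⟩ : ∃ q₁ v, fderiv ℝ G q₁ v ≠ 0 := by
      by_contra! h
      exact hne (is_const_of_fderiv_eq_zero (hGreg.differentiable two_ne_zero)
        (fun x => ContinuousLinearMap.ext (h x)) q₀ q₀')
    have ha : 0 < fderiv ℝ G q₁ v ^ 2 := by positivity
    refine ⟨4 * M * (2 * C * ‖v‖ ^ 2 + 1) / fderiv ℝ G q₁ v ^ 2 + 1, by positivity, ?_⟩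
    rintro ε hε ⟨ν, hν, hper, hL, hinv⟩
    have h := abs_mul_sq_fderiv_le_of_invariant_graph hpos hGreg hC
      (fun x => (Real.norm_eq_abs _).symm.trans_le (hM x)) (hfam ε) hν hper hL hinv q₁ v
    rw [← le_div_iff₀ ha] at h
    linarith

/-- Proposition C.2 of the paper. Let `f` be a strongly positive
symplectic twist map of `𝕋^d × ℝ^d` with bounded rate, `G ∈ C²(𝕋^d)` and `(F_ε)` lifts
of the twist maps `f_ε` generated by `S_ε = S + εG`. Then: (i) for every `ε₀ ≥ 0` there
is `K(ε₀) ≥ 0` such that every `C¹` Lagrangian graph invariant by some `f_ε` with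
`|ε| ≤ ε₀` is Lipschitz with Lipschitz constant `K(ε₀)`; (ii) if `G` is not constant
there is `Λ > 0` such that for `|ε| ≥ Λ` the map `f_ε` admits no `C¹` Lagrangian
invariant graph. -/
theorem statement19 (d : ℕ) (F : Ed d × Ed d → Ed d × Ed d) (S : Ed d × Ed d → ℝ)
    (G : Ed d → ℝ) (hGreg : ContDiff ℝ 2 G) (hGper : ZdPeriodicFun G)
    (Fε : ℝ → Ed d × Ed d → Ed d × Ed d)
    (hFS : IsSymplecticTwistLift F S)
    (hfam : ∀ ε : ℝ, IsSymplecticTwistLift (Fε ε) fun x => S x + ε * G x.1)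
    (hpos : StronglyPositiveGenFun S)
    (hrate : BoundedRateGenFun S) :
    (∀ ε₀ : ℝ, 0 ≤ ε₀ → ∃ K : NNReal, ∀ ε : ℝ, |ε| ≤ ε₀ →
      ∀ ν : Ed d → Ed d, ContDiff ℝ 1 ν → ZdPeriodic ν → IsLagrangianGraph ν →
        (Fε ε) '' graphSet ν = graphSet ν → LipschitzWith K ν) ∧
    ((∃ q q' : Ed d, G q ≠ G q') → ∃ Λ : ℝ, 0 < Λ ∧ ∀ ε : ℝ, Λ ≤ |ε| →
      ¬ ∃ ν : Ed d → Ed d, ContDiff ℝ 1 ν ∧ ZdPeriodic ν ∧ IsLagrangianGraph ν ∧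
        (Fε ε) '' graphSet ν = graphSet ν) :=
  statement19_general d S G hGreg hGper Fε hfam hpos hrate

end
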